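/- Let ξ(q) := φ(-q⁹)/φ(-q), U the 3-dissection operator (U(Σ aₙqⁿ) = Σ a_{3n}qⁿ), and 𝒳ᵢ := U(ξⁱ). Then for every i ≥ 3, 𝒳ᵢ = (ξ - 3ξ² + 3ξ³)(3𝒳_{i-1} - 3𝒳_{i-2} + 𝒳_{i-3}). -/

import Mathlib

open PowerSeries

/-- φ(-q) = Σ_{k∈ℤ} (-1)^k q^{k²} as a formal power series over ℤ. -/
noncomputable def phiNeg : PowerSeries ℤ :=
  PowerSeries.mk fun n =>
    if n = 0 then 1 else if Nat.sqrt n ^ 2 = n then 2 * (-1) ^ Nat.sqrt n else 0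

open Classical in
/-- ψ(q) = Σ_{k≥0} q^{k(k+1)/2} as a formal power series over ℤ. -/
noncomputable def psi : PowerSeries ℤ :=
  PowerSeries.mk fun n =>
    if ∃ k ∈ Finset.range (n + 1), k * (k + 1) / 2 = n then 1 else 0

/-- Substitution q ↦ q^d in a formal power series. -/
noncomputable def expand (d : ℕ) (f : PowerSeries ℤ) : PowerSeries ℤ :=
  PowerSeries.mk fun n => if d ∣ n then PowerSeries.coeff (n / d) f else 0

/-- The 3-dissection operator U(Σ aₙ qⁿ) = Σ a_{3n} qⁿ. -/
noncomputable def U (f : PowerSeries ℤ) : PowerSeries ℤ :=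
  PowerSeries.mk fun n => PowerSeries.coeff (3 * n) f

/-- The multiplicative inverse of φ(-q) (constant coefficient 1). -/
noncomputable def phiNegInv : PowerSeries ℤ := PowerSeries.invOfUnit phiNeg 1

/-- The multiplicative inverse of ψ(q) (constant coefficient 1). -/
noncomputable def psiInv : PowerSeries ℤ := PowerSeries.invOfUnit psi 1

/-- ph₃(n): coefficients of φ(-q³)/φ(-q). -/
noncomputable def ph3 (n : ℕ) : ℤ :=
  PowerSeries.coeff n (expand 3 phiNeg * phiNegInv)

/-- ps₃(n): coefficients of ψ(q³)/ψ(q). -/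
noncomputable def ps3 (n : ℕ) : ℤ :=
  PowerSeries.coeff n (expand 3 psi * psiInv)

/-- ξ(q) := φ(-q⁹)/φ(-q). -/
noncomputable def xi : PowerSeries ℤ := expand 9 phiNeg * phiNegInv

/-- F(q) := φ(-q³)/φ(-q). -/
noncomputable def Fph : PowerSeries ℤ := expand 3 phiNeg * phiNegInv

/-- γ(q) := F(q)/F(q⁹). -/
noncomputable def gam : PowerSeries ℤ := Fph * PowerSeries.invOfUnit (expand 9 Fph) 1

/-- G(q) := ψ(q³)/ψ(q). -/
noncomputable def Gps : PowerSeries ℤ := expand 3 psi * psiInv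

/-- ζ(q) := q·ψ(q⁹)/ψ(q). -/
noncomputable def zeta : PowerSeries ℤ := PowerSeries.X * expand 9 psi * psiInv


/-! Everything rests on two theta identities: the 3-dissection φ(-q) = φ(-q⁹) - 2qW(q³), where
W(q) = Σₖ (-1)ᵏ q^(3k²+2k), and the quartic identity φ(-q)⁴ = φ(-q³)⁴ - 8qW(q)³φ(-q³). Both are
compared coefficientwise as signed counts of lattice points. The first sorts k ∈ ℤ by k mod 3.
For the second, the map ρ : ℤ⁴ → ℤ⁴ with ρᵀρ = 3 carries the points of norm n onto the points of
norm 3n of the lattice ρ(ℤ⁴). This lattice is the union of 3ℤ⁴, which gives φ(-q³)⁴, and eight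
further cosets of 3ℤ⁴; signed permutations of the coordinates identify these cosets with one
another, and each of them contributes -qW(q)³φ(-q³).

Put u = qW(q³). The dissection gives ξ - 1 = 2u/φ(-q), so
3ξ² - 3ξ + 1 = ξ³ - (ξ - 1)³ = (φ(-q⁹)³ - 8u³)/φ(-q)³. Together with the same identity at q³ and
the quartic identity at q³ and q⁹ this yields ξ³ = P(ξ(q³))·(3ξ² - 3ξ + 1) with
P(x) = x - 3x² + 3x³. Since U(f(q³)g(q)) = f(q)·U(g), multiplying by ξ^(i-3) and applying U gives
the recurrence. -/

open Set Function

local notation "expand₃" => PowerSeries.expand (R := ℤ) 3 three_ne_zero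

section Finsum

variable {α β M : Type*} [AddCommMonoid M]

lemma finsum_mem_nbij' {s : Set α} {t : Set β} {f : α → M} {g : β → M} (e : α → β) (e' : β → α)
    (he : MapsTo e s t) (he' : MapsTo e' t s) (hleft : ∀ x ∈ s, e' (e x) = x)
    (hright : ∀ y ∈ t, e (e' y) = y) (h : ∀ x ∈ s, f x = g (e x)) :
    ∑ᶠ x ∈ s, f x = ∑ᶠ y ∈ t, g y :=
  finsum_mem_eq_of_bijOn e (InvOn.bijOn ⟨hleft, hright⟩ he he') h

lemma finsum_mem_eq_of_involutive {σ : α → α} (hσ : Involutive σ) {s t : Set α}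
    (hst : MapsTo σ s t) (hts : MapsTo σ t s) {f : α → M} (hf : ∀ x, f (σ x) = f x) :
    ∑ᶠ x ∈ s, f x = ∑ᶠ x ∈ t, f x :=
  finsum_mem_nbij' σ σ hst hts (fun x _ => hσ x) (fun y _ => hσ y) fun x _ => (hf x).symm

lemma finsum_mem_prod_mul {R : Type*} [NonUnitalNonAssocSemiring R] {s : Set α} {t : Set β}
    (hs : s.Finite) (ht : t.Finite) (f : α → R) (g : β → R) :
    ∑ᶠ p ∈ s ×ˢ t, f p.1 * g p.2 = (∑ᶠ x ∈ s, f x) * ∑ᶠ y ∈ t, g y := by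
  rw [finsum_mem_eq_finite_toFinset_sum _ (hs.prod ht), finsum_mem_eq_finite_toFinset_sum _ hs,
    finsum_mem_eq_finite_toFinset_sum _ ht, ← Set.Finite.toFinset_prod, Finset.sum_product,
    Finset.sum_mul_sum]

end Finsum

section ThetaSeries

variable {α β R : Type*} [Semiring R]

structure IsThetaExponent (E : α → ℤ) : Prop where
  nonneg : ∀ x, 0 ≤ E x
  finite_le : ∀ n, {x | E x ≤ n}.Finite

/-- A `finsum` over an infinite fibre is `0`, so this is `Σₓ w x · q^(E x)` only when `E` is an
`IsThetaExponent`. -/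
noncomputable def thetaSeries (E : α → ℤ) (w : α → R) : PowerSeries R :=
  PowerSeries.mk fun n => ∑ᶠ x ∈ {x | E x = n}, w x

lemma coeff_thetaSeries (E : α → ℤ) (w : α → R) (n : ℕ) :
    coeff n (thetaSeries E w) = ∑ᶠ x ∈ {x | E x = n}, w x :=
  coeff_mk _ _

namespace IsThetaExponent

variable {E : α → ℤ} {F : β → ℤ}

lemma finite_eq (hE : IsThetaExponent E) (n : ℤ) : {x | E x = n}.Finite :=
  (hE.finite_le n).subset fun _ hx => le_of_eq hx

lemma prod (hE : IsThetaExponent E) (hF : IsThetaExponent F) :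
    IsThetaExponent fun p : α × β => E p.1 + F p.2 where
  nonneg p := add_nonneg (hE.nonneg p.1) (hF.nonneg p.2)
  finite_le n := ((hE.finite_le n).prod (hF.finite_le n)).subset fun p hp => by
    have := hE.nonneg p.1
    have := hF.nonneg p.2
    simp only [mem_ofPred_eq, mem_prod] at hp ⊢
    constructor <;> linarith

lemma const_mul (hE : IsThetaExponent E) {d : ℤ} (hd : 0 < d) :
    IsThetaExponent fun x => d * E x where
  nonneg x := mul_nonneg hd.le (hE.nonneg x)
  finite_le n := (hE.finite_le n).subset fun x hx => by
    have := hE.nonneg x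
    simp only [mem_ofPred_eq] at hx ⊢
    nlinarith

lemma of_abs_le {E : ℤ → ℤ} (h : ∀ k, |k| ≤ E k) : IsThetaExponent E where
  nonneg k := (abs_nonneg k).trans (h k)
  finite_le n := (Set.finite_Icc (-n) n).subset fun k hk => by
    simp only [mem_ofPred_eq] at hk
    exact abs_le.mp ((h k).trans hk)

end IsThetaExponent

lemma thetaSeries_mul {E : α → ℤ} {F : β → ℤ} (hE : IsThetaExponent E) (hF : IsThetaExponent F)
    (v : α → R) (w : β → R) :
    thetaSeries E v * thetaSeries F w =
      thetaSeries (fun p : α × β => E p.1 + F p.2) fun p => v p.1 * w p.2 := by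
  ext n
  let fibre : ℕ × ℕ → Set (α × β) := fun i => {x | E x = i.1} ×ˢ {y | F y = i.2}
  have hunion : {p : α × β | E p.1 + F p.2 = n} =
      ⋃ i ∈ (Finset.HasAntidiagonal.antidiagonal n : Set (ℕ × ℕ)), fibre i := by
    ext p
    have := hE.nonneg p.1
    have := hF.nonneg p.2
    simp only [mem_ofPred_eq, mem_iUnion, Finset.mem_coe, Finset.HasAntidiagonal.mem_antidiagonal,
      mem_prod, exists_prop, Prod.exists, fibre]
    constructor
    · exact fun h => ⟨(E p.1).toNat, (F p.2).toNat, by omega, by omega, by omega⟩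
    · rintro ⟨i, j, rfl, hi, hj⟩
      rw [hi, hj, Nat.cast_add]
  have hdisj : (Finset.HasAntidiagonal.antidiagonal n : Set (ℕ × ℕ)).PairwiseDisjoint fibre := by
    rintro ⟨i, j⟩ - ⟨i', j'⟩ - hne
    refine Set.disjoint_left.mpr fun p hp hp' => hne ?_
    simp only [fibre, mem_prod, mem_ofPred_eq] at hp hp'
    rw [Prod.mk.injEq]
    omega
  rw [coeff_mul, coeff_thetaSeries, hunion, finsum_mem_biUnion hdisj (Finset.finite_toSet _)
    fun i _ => (hE.finite_eq _).prod (hF.finite_eq _), finsum_mem_coe_finset]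
  refine Finset.sum_congr rfl fun i _ => ?_
  rw [coeff_thetaSeries, coeff_thetaSeries, finsum_mem_prod_mul (hE.finite_eq _) (hF.finite_eq _)]

lemma X_mul_thetaSeries {E : α → ℤ} (hE : IsThetaExponent E) (w : α → R) :
    X * thetaSeries E w = thetaSeries (fun x => E x + 1) w := by
  ext n
  rw [coeff_thetaSeries]
  rcases n with _ | n
  · have hempty : {x | E x + 1 = ((0 : ℕ) : ℤ)} = ∅ :=
      Set.eq_empty_of_forall_notMem fun x hx => by
        simp only [mem_ofPred_eq, Nat.cast_zero] at hx
        linarith [hE.nonneg x]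
    rw [coeff_zero_X_mul, hempty, finsum_mem_empty]
  · rw [coeff_succ_X_mul, coeff_thetaSeries]
    congr! 3 with x
    push_cast
    exact (add_left_inj 1).symm

lemma expand_thetaSeries {S : Type*} [CommRing S] {d : ℕ} (hd : d ≠ 0) (E : α → ℤ) (w : α → S) :
    PowerSeries.expand d hd (thetaSeries E w) = thetaSeries (fun x => d * E x) w := by
  ext n
  rw [PowerSeries.coeff_expand, coeff_thetaSeries _ _ n]
  split_ifs with hdn
  · obtain ⟨m, rfl⟩ := hdn
    rw [Nat.mul_div_cancel_left m (Nat.pos_of_ne_zero hd), coeff_thetaSeries]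
    congr! 3 with x
    push_cast
    exact (mul_right_inj' (by exact_mod_cast hd)).symm
  · have hempty : {x | (d : ℤ) * E x = n} = ∅ :=
      Set.eq_empty_of_forall_notMem fun x hx => hdn (by exact_mod_cast Dvd.intro _ hx)
    rw [hempty, finsum_mem_empty]

end ThetaSeries

lemma negOnePow_eq_of_sub_emod_two {a b : ℤ} (h : (a - b) % 2 = 0) :
    (a.negOnePow : ℤ) = b.negOnePow :=
  congrArg _ ((Int.negOnePow_eq_iff a b).mpr (Int.even_iff.mpr h))

lemma negOnePow_eq_neg_of_sub_emod_two {a b : ℤ} (h : (a - b) % 2 = 1) :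
    (a.negOnePow : ℤ) = -b.negOnePow := by
  rw [← Units.val_neg, ← Int.negOnePow_succ]
  exact negOnePow_eq_of_sub_emod_two (by omega)

lemma expand_eq_powerSeries_expand {d : ℕ} (hd : d ≠ 0) (f : PowerSeries ℤ) :
    _root_.expand d f = PowerSeries.expand d hd f := by
  ext n
  rw [PowerSeries.coeff_expand, _root_.expand, coeff_mk]

lemma setOf_sq_eq_natCast (n : ℕ) :
    {k : ℤ | k ^ 2 = n} =
      if Nat.sqrt n ^ 2 = n then {(Nat.sqrt n : ℤ), -(Nat.sqrt n : ℤ)} else ∅ := by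
  ext k
  split_ifs with hn
  · rw [← hn]
    push_cast
    simp [sq_eq_sq_iff_eq_or_eq_neg]
  · simp only [mem_ofPred_eq, mem_empty_iff_false, iff_false]
    intro hk
    apply hn
    rw [← Int.natAbs_sq, ← Int.natCast_pow] at hk
    rw [← Int.ofNat_inj.mp hk, Nat.sqrt_eq']

lemma isThetaExponent_sq : IsThetaExponent fun k : ℤ => k ^ 2 :=
  .of_abs_le fun k => by rw [Int.abs_eq_natAbs]; exact Int.natAbs_le_self_sq k

lemma phiNeg_eq_thetaSeries :
    phiNeg = thetaSeries (fun k : ℤ => k ^ 2) fun k => (k.negOnePow : ℤ) := by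
  ext n
  rw [coeff_thetaSeries, setOf_sq_eq_natCast, phiNeg, coeff_mk]
  by_cases hn : n = 0
  · subst hn
    simp
  · split_ifs with hs
    · have hs0 : (Nat.sqrt n : ℤ) ≠ -(Nat.sqrt n : ℤ) := by
        have : Nat.sqrt n ≠ 0 := fun h => hn (by rw [← hs, h]; rfl)
        omega
      rw [finsum_mem_pair hs0, Int.negOnePow_neg, Int.coe_negOnePow_natCast]
      ring
    · rw [finsum_mem_empty]

noncomputable def thetaW : PowerSeries ℤ :=
  thetaSeries (fun k : ℤ => 3 * k ^ 2 + 2 * k) fun k => (k.negOnePow : ℤ)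

lemma isThetaExponent_thetaW : IsThetaExponent fun k : ℤ => 3 * k ^ 2 + 2 * k :=
  .of_abs_le fun k => by
    rcases abs_cases k with ⟨h, -⟩ | ⟨h, -⟩ <;> rw [h] <;>
      nlinarith [Int.le_self_sq k, Int.le_self_sq (-k)]

lemma finsum_negOnePow_sq_emod_three_zero (n : ℤ) :
    ∑ᶠ k ∈ {k : ℤ | k ^ 2 = n ∧ k % 3 = 0}, (k.negOnePow : ℤ) =
      ∑ᶠ k ∈ {k : ℤ | 9 * k ^ 2 = n}, (k.negOnePow : ℤ) := by
  refine (finsum_mem_nbij' (fun j => 3 * j) (fun k => k / 3) ?_ ?_ (fun j _ => by omega)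
    (fun k hk => by simp only [mem_ofPred_eq] at hk; omega)
    fun j _ => negOnePow_eq_of_sub_emod_two (by omega)).symm
  · intro j hj
    simp only [mem_ofPred_eq] at hj ⊢
    exact ⟨by linear_combination hj, by omega⟩
  · rintro k ⟨hk, hk3⟩
    obtain ⟨j, rfl⟩ : ∃ j, k = 3 * j := ⟨k / 3, by omega⟩
    simp only [mem_ofPred_eq, Int.mul_ediv_cancel_left _ three_ne_zero]
    linear_combination hk

lemma finsum_negOnePow_sq_emod_three_one (n : ℤ) :
    ∑ᶠ k ∈ {k : ℤ | k ^ 2 = n ∧ k % 3 = 1}, (k.negOnePow : ℤ) =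
      -∑ᶠ k ∈ {k : ℤ | 3 * (3 * k ^ 2 + 2 * k) + 1 = n}, (k.negOnePow : ℤ) := by
  simp only [← finsum_neg_distrib]
  refine (finsum_mem_nbij' (fun j => 3 * j + 1) (fun k => (k - 1) / 3) ?_ ?_ (fun j _ => by omega)
    (fun k hk => by simp only [mem_ofPred_eq] at hk; omega)
    fun j _ => (negOnePow_eq_neg_of_sub_emod_two (by omega)).symm).symm
  · intro j hj
    simp only [mem_ofPred_eq] at hj ⊢
    exact ⟨by linear_combination hj, by omega⟩
  · rintro k ⟨hk, hk3⟩
    obtain ⟨j, rfl⟩ : ∃ j, k = 3 * j + 1 := ⟨(k - 1) / 3, by omega⟩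
    simp only [mem_ofPred_eq, add_sub_cancel_right, Int.mul_ediv_cancel_left _ three_ne_zero]
    linear_combination hk

lemma finsum_negOnePow_sq_emod_three_two (n : ℤ) :
    ∑ᶠ k ∈ {k : ℤ | k ^ 2 = n ∧ k % 3 = 2}, (k.negOnePow : ℤ) =
      -∑ᶠ k ∈ {k : ℤ | 3 * (3 * k ^ 2 + 2 * k) + 1 = n}, (k.negOnePow : ℤ) := by
  rw [← finsum_negOnePow_sq_emod_three_one]
  refine finsum_mem_eq_of_involutive neg_involutive ?_ ?_ fun k => by
    rw [Int.negOnePow_neg]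
  all_goals
    rintro k ⟨hk, hk3⟩
    exact ⟨by rw [neg_sq, hk], by omega⟩

lemma finsum_negOnePow_sq_eq (n : ℤ) :
    ∑ᶠ k ∈ {k : ℤ | k ^ 2 = n}, (k.negOnePow : ℤ) =
      ∑ᶠ k ∈ {k : ℤ | 9 * k ^ 2 = n}, (k.negOnePow : ℤ) -
        2 * ∑ᶠ k ∈ {k : ℤ | 3 * (3 * k ^ 2 + 2 * k) + 1 = n}, (k.negOnePow : ℤ) := by
  let piece (r : ℤ) : Set ℤ := {k | k ^ 2 = n ∧ k % 3 = r}
  have hfin (r : ℤ) : (piece r).Finite :=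
    (isThetaExponent_sq.finite_eq n).subset fun k hk => hk.1
  have hdisj {r r' : ℤ} (h : r ≠ r') : Disjoint (piece r) (piece r') :=
    Set.disjoint_left.mpr fun k hk hk' => h (hk.2.symm.trans hk'.2)
  have hsplit : {k : ℤ | k ^ 2 = n} = piece 0 ∪ (piece 1 ∪ piece 2) := by
    ext k
    simp only [piece, mem_union, mem_ofPred_eq]
    omega
  rw [hsplit, finsum_mem_union ((hdisj (by norm_num)).union_right (hdisj (by norm_num))) (hfin 0)
      ((hfin 1).union (hfin 2)),
    finsum_mem_union (hdisj (by norm_num)) (hfin 1) (hfin 2), finsum_negOnePow_sq_emod_three_zero,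
    finsum_negOnePow_sq_emod_three_one, finsum_negOnePow_sq_emod_three_two]
  ring

lemma phiNeg_dissection : phiNeg = expand₃ (expand₃ phiNeg) - 2 * (X * expand₃ thetaW) := by
  rw [← PowerSeries.expand_mul 3 three_ne_zero 3 three_ne_zero, thetaW, phiNeg_eq_thetaSeries,
    expand_thetaSeries, expand_thetaSeries,
    X_mul_thetaSeries (isThetaExponent_thetaW.const_mul (by norm_num))]
  ext n
  rw [map_sub, ← map_ofNat C, coeff_C_mul]
  simp only [coeff_thetaSeries]
  exact finsum_negOnePow_sq_eq n

def sumSq : ℤ × ℤ × ℤ × ℤ → ℤ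
  | (a, b, c, d) => a ^ 2 + b ^ 2 + c ^ 2 + d ^ 2

def altSign : ℤ × ℤ × ℤ × ℤ → ℤ
  | (a, b, c, d) => ((a + b + c + d).negOnePow : ℤ)

def thetaWNorm : ℤ × ℤ × ℤ × ℤ → ℤ
  | (a, b, c, d) => 3 * a ^ 2 + 2 * a + 3 * b ^ 2 + 2 * b + 3 * c ^ 2 + 2 * c + 3 * d ^ 2 + 1

lemma isThetaExponent_sumSq : IsThetaExponent sumSq := by
  convert isThetaExponent_sq.prod
    (isThetaExponent_sq.prod (isThetaExponent_sq.prod isThetaExponent_sq)) using 1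
  funext ⟨a, b, c, d⟩
  simp only [sumSq]
  ring

/-- `ρᵀρ = 3`; `rhoInv = ρᵀ / 3` inverts `rho` on `rhoLattice = ρ(ℤ⁴)`. -/
def rho : ℤ × ℤ × ℤ × ℤ → ℤ × ℤ × ℤ × ℤ
  | (a, b, c, d) => (a - b - c, a + b - d, a + c + d, b - c + d)

def rhoInv : ℤ × ℤ × ℤ × ℤ → ℤ × ℤ × ℤ × ℤ
  | (a, b, c, d) => ((a + b + c) / 3, (b - a + d) / 3, (c - d - a) / 3, (d + c - b) / 3)

def rhoLattice : Set (ℤ × ℤ × ℤ × ℤ) :=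
  {z | 3 ∣ z.1 + z.2.1 + z.2.2.1 ∧ 3 ∣ z.2.1 - z.1 + z.2.2.2}

lemma sumSq_rho (x : ℤ × ℤ × ℤ × ℤ) : sumSq (rho x) = 3 * sumSq x := by
  obtain ⟨a, b, c, d⟩ := x
  simp only [sumSq, rho]
  ring

lemma altSign_rho (x : ℤ × ℤ × ℤ × ℤ) : altSign (rho x) = altSign x := by
  obtain ⟨a, b, c, d⟩ := x
  exact negOnePow_eq_of_sub_emod_two (by omega)

lemma rho_mem_rhoLattice (x : ℤ × ℤ × ℤ × ℤ) : rho x ∈ rhoLattice := by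
  obtain ⟨a, b, c, d⟩ := x
  simp only [rhoLattice, rho, mem_ofPred_eq]
  omega

lemma rhoInv_rho (x : ℤ × ℤ × ℤ × ℤ) : rhoInv (rho x) = x := by
  obtain ⟨a, b, c, d⟩ := x
  simp only [rho, rhoInv, Prod.mk.injEq]
  omega

lemma rho_rhoInv {z : ℤ × ℤ × ℤ × ℤ} (hz : z ∈ rhoLattice) : rho (rhoInv z) = z := by
  obtain ⟨a, b, c, d⟩ := z
  simp only [rhoLattice, mem_ofPred_eq] at hz
  simp only [rho, rhoInv, Prod.mk.injEq]
  omega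

lemma finsum_sumSq_eq_finsum_rhoLattice (n : ℤ) :
    ∑ᶠ x ∈ {x | sumSq x = n}, altSign x =
      ∑ᶠ z ∈ rhoLattice ∩ {z | sumSq z = 3 * n}, altSign z := by
  refine finsum_mem_nbij' rho rhoInv (fun x hx => ⟨rho_mem_rhoLattice x, ?_⟩) (fun z hz => ?_)
    (fun x _ => rhoInv_rho x) (fun z hz => rho_rhoInv hz.1) fun x _ => (altSign_rho x).symm
  · simp only [mem_ofPred_eq, sumSq_rho] at hx ⊢
    rw [hx]
  · obtain ⟨hz, hnorm⟩ := hz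
    simp only [mem_ofPred_eq] at hnorm ⊢
    rw [← rho_rhoInv hz, sumSq_rho] at hnorm
    omega

/-- The nine cosets of `3ℤ⁴` in `rhoLattice`, indexed by the residues of the first two
coordinates. -/
def residueClass (r : ℤ × ℤ) : Set (ℤ × ℤ × ℤ × ℤ) :=
  {z | z ∈ rhoLattice ∧ (z.1 % 3, z.2.1 % 3) = r}

def nonzeroResidues : Finset (ℤ × ℤ) :=
  {(1, 1), (2, 2), (1, 2), (2, 1), (1, 0), (2, 0), (0, 1), (0, 2)}

lemma rhoLattice_eq_biUnion :
    rhoLattice = ⋃ r ∈ (↑(insert (0, 0) nonzeroResidues) : Set (ℤ × ℤ)), residueClass r := by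
  ext ⟨a, b, c, d⟩
  simp only [nonzeroResidues, residueClass, Finset.coe_insert, mem_insert_iff,
    Finset.coe_singleton, mem_singleton_iff, mem_iUnion, exists_prop, Prod.exists, Prod.mk.injEq,
    mem_ofPred_eq]
  exact ⟨fun h => ⟨a % 3, b % 3, by omega, h, rfl, rfl⟩, fun ⟨_, _, _, h, _⟩ => h⟩

lemma finsum_residueClass_zero (n : ℤ) :
    ∑ᶠ z ∈ residueClass (0, 0) ∩ {z | sumSq z = 3 * n}, altSign z =
      ∑ᶠ y ∈ {y | 3 * sumSq y = n}, altSign y := by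
  refine (finsum_mem_nbij' (fun y => (3 : ℤ) • y)
    (fun z => (z.1 / 3, z.2.1 / 3, z.2.2.1 / 3, z.2.2.2 / 3)) ?_ ?_ ?_ ?_ ?_).symm
  · rintro ⟨a, b, c, d⟩ hy
    simp only [residueClass, rhoLattice, sumSq, mem_inter_iff, mem_ofPred_eq, Prod.smul_mk,
      smul_eq_mul, Prod.mk.injEq] at hy ⊢
    exact ⟨⟨⟨by omega, by omega⟩, by omega, by omega⟩, by linear_combination 3 * hy⟩
  · rintro ⟨z₁, z₂, z₃, z₄⟩ ⟨⟨⟨h₁, h₂⟩, hr⟩, hz⟩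
    simp only [mem_ofPred_eq, Prod.mk.injEq, sumSq] at h₁ h₂ hr hz ⊢
    obtain ⟨⟨a, rfl⟩, ⟨b, rfl⟩, ⟨c, rfl⟩, ⟨d, rfl⟩⟩ :
      3 ∣ z₁ ∧ 3 ∣ z₂ ∧ 3 ∣ z₃ ∧ 3 ∣ z₄ := by omega
    simp only [Int.mul_ediv_cancel_left _ three_ne_zero]
    linarith
  · rintro ⟨a, b, c, d⟩ -
    simp only [Prod.smul_mk, smul_eq_mul, Prod.mk.injEq]
    omega
  · rintro ⟨z₁, z₂, z₃, z₄⟩ ⟨⟨⟨h₁, h₂⟩, hr⟩, -⟩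
    simp only [Prod.mk.injEq, Prod.smul_mk, smul_eq_mul] at h₁ h₂ hr ⊢
    omega
  · rintro ⟨a, b, c, d⟩ -
    simp only [altSign, Prod.smul_mk, smul_eq_mul]
    exact negOnePow_eq_of_sub_emod_two (by omega)

def residueOneEmb : ℤ × ℤ × ℤ × ℤ → ℤ × ℤ × ℤ × ℤ
  | (a, b, c, d) => (3 * a + 1, 3 * b + 1, 3 * c + 1, 3 * d)

lemma finsum_residueClass_one (n : ℤ) :
    ∑ᶠ z ∈ residueClass (1, 1) ∩ {z | sumSq z = 3 * n}, altSign z =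
      -∑ᶠ t ∈ {t | thetaWNorm t = n}, altSign t := by
  simp only [← finsum_neg_distrib]
  refine (finsum_mem_nbij' residueOneEmb
    (fun z => ((z.1 - 1) / 3, (z.2.1 - 1) / 3, (z.2.2.1 - 1) / 3, z.2.2.2 / 3)) ?_ ?_ ?_ ?_ ?_).symm
  · rintro ⟨a, b, c, d⟩ ht
    simp only [residueClass, rhoLattice, sumSq, thetaWNorm, residueOneEmb, mem_inter_iff,
      mem_ofPred_eq, Prod.mk.injEq] at ht ⊢
    exact ⟨⟨⟨by omega, by omega⟩, by omega, by omega⟩, by linear_combination 3 * ht⟩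
  · rintro ⟨z₁, z₂, z₃, z₄⟩ ⟨⟨⟨h₁, h₂⟩, hr⟩, hz⟩
    simp only [mem_ofPred_eq, Prod.mk.injEq, sumSq, thetaWNorm] at h₁ h₂ hr hz ⊢
    obtain ⟨a, rfl⟩ : ∃ a, z₁ = 3 * a + 1 := ⟨z₁ / 3, by omega⟩
    obtain ⟨b, rfl⟩ : ∃ b, z₂ = 3 * b + 1 := ⟨z₂ / 3, by omega⟩
    obtain ⟨c, rfl⟩ : ∃ c, z₃ = 3 * c + 1 := ⟨z₃ / 3, by omega⟩
    obtain ⟨d, rfl⟩ : ∃ d, z₄ = 3 * d := ⟨z₄ / 3, by omega⟩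
    simp only [add_sub_cancel_right, Int.mul_ediv_cancel_left _ three_ne_zero]
    linarith
  · rintro ⟨a, b, c, d⟩ -
    simp only [residueOneEmb, Prod.mk.injEq]
    omega
  · rintro ⟨z₁, z₂, z₃, z₄⟩ ⟨⟨⟨h₁, h₂⟩, hr⟩, -⟩
    simp only [Prod.mk.injEq, residueOneEmb] at h₁ h₂ hr ⊢
    omega
  · rintro ⟨a, b, c, d⟩ -
    exact (negOnePow_eq_neg_of_sub_emod_two (by omega)).symm

lemma exists_involutive_swap_residueClass {r : ℤ × ℤ} (hr : r ∈ nonzeroResidues) :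
    ∃ σ : ℤ × ℤ × ℤ × ℤ → ℤ × ℤ × ℤ × ℤ, Involutive σ ∧ (∀ z, sumSq (σ z) = sumSq z) ∧
      (∀ z, altSign (σ z) = altSign z) ∧ MapsTo σ (residueClass r) (residueClass (1, 1)) ∧
      MapsTo σ (residueClass (1, 1)) (residueClass r) := by
  simp only [nonzeroResidues, Finset.mem_insert, Finset.mem_singleton] at hr
  rcases hr with rfl | rfl | rfl | rfl | rfl | rfl | rfl | rfl <;>
  [refine ⟨fun x => x, ?_⟩; refine ⟨fun ⟨a, b, c, d⟩ => (-a, -b, -c, -d), ?_⟩;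
    refine ⟨fun ⟨a, b, c, d⟩ => (a, -b, -d, -c), ?_⟩;
    refine ⟨fun ⟨a, b, c, d⟩ => (-a, b, d, c), ?_⟩;
    refine ⟨fun ⟨a, b, c, d⟩ => (a, d, -c, b), ?_⟩;
    refine ⟨fun ⟨a, b, c, d⟩ => (-a, -d, c, -b), ?_⟩;
    refine ⟨fun ⟨a, b, c, d⟩ => (-d, b, -c, -a), ?_⟩;
    refine ⟨fun ⟨a, b, c, d⟩ => (d, -b, c, a), ?_⟩] <;>
  (refine ⟨fun ⟨a, b, c, d⟩ => ?_, fun ⟨a, b, c, d⟩ => ?_, fun ⟨a, b, c, d⟩ => ?_,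
    fun ⟨a, b, c, d⟩ => ?_, fun ⟨a, b, c, d⟩ => ?_⟩ <;>
  [simp only [neg_neg]; simp only [sumSq, neg_sq, add_comm, add_left_comm, add_assoc];
    exact negOnePow_eq_of_sub_emod_two (by omega); skip; skip])
  all_goals
    intro hz
    simp only [residueClass, rhoLattice, mem_ofPred_eq, Prod.mk.injEq] at hz ⊢
    omega

lemma finsum_residueClass_of_mem_nonzeroResidues {r : ℤ × ℤ} (hr : r ∈ nonzeroResidues)
    (n : ℤ) :
    ∑ᶠ z ∈ residueClass r ∩ {z | sumSq z = 3 * n}, altSign z =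
      -∑ᶠ t ∈ {t | thetaWNorm t = n}, altSign t := by
  obtain ⟨σ, hσ, hsumSq, hsign, hto, hfrom⟩ := exists_involutive_swap_residueClass hr
  rw [← finsum_residueClass_one n]
  refine finsum_mem_eq_of_involutive hσ (s := residueClass r ∩ _) (t := residueClass (1, 1) ∩ _)
    (fun z hz => ⟨hto hz.1, ?_⟩) (fun z hz => ⟨hfrom hz.1, ?_⟩) hsign <;>
  simp only [mem_ofPred_eq, hsumSq] <;> exact hz.2

lemma finsum_altSign_sumSq (n : ℤ) :
    ∑ᶠ x ∈ {x | sumSq x = n}, altSign x =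
      ∑ᶠ x ∈ {x | 3 * sumSq x = n}, altSign x -
        8 * ∑ᶠ x ∈ {x | thetaWNorm x = n}, altSign x := by
  have hdisj : (↑(insert (0, 0) nonzeroResidues) : Set (ℤ × ℤ)).PairwiseDisjoint
      fun r => residueClass r ∩ {z | sumSq z = 3 * n} := fun r _ r' _ hne =>
    Set.disjoint_left.mpr fun z hz hz' => hne (hz.1.2.symm.trans hz'.1.2)
  rw [finsum_sumSq_eq_finsum_rhoLattice, rhoLattice_eq_biUnion, iUnion₂_inter,
    finsum_mem_biUnion hdisj (Finset.finite_toSet _)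
      fun r _ => (isThetaExponent_sumSq.finite_eq _).subset inter_subset_right,
    finsum_mem_coe_finset, Finset.sum_insert (by decide), finsum_residueClass_zero,
    Finset.sum_congr rfl fun r hr => finsum_residueClass_of_mem_nonzeroResidues hr n,
    Finset.sum_const, show nonzeroResidues.card = 8 from rfl, nsmul_eq_mul]
  ring

lemma thetaSeries_negOnePow_mul_four {E₁ E₂ E₃ E₄ : ℤ → ℤ} (h₁ : IsThetaExponent E₁)
    (h₂ : IsThetaExponent E₂) (h₃ : IsThetaExponent E₃) (h₄ : IsThetaExponent E₄) :
    thetaSeries E₁ (fun k => (k.negOnePow : ℤ)) * (thetaSeries E₂ (fun k => (k.negOnePow : ℤ)) *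
      (thetaSeries E₃ (fun k => (k.negOnePow : ℤ)) * thetaSeries E₄ fun k => (k.negOnePow : ℤ))) =
      thetaSeries (fun x : ℤ × ℤ × ℤ × ℤ => E₁ x.1 + (E₂ x.2.1 + (E₃ x.2.2.1 + E₄ x.2.2.2)))
        altSign := by
  rw [thetaSeries_mul h₃ h₄, thetaSeries_mul h₂ (h₃.prod h₄),
    thetaSeries_mul h₁ (h₂.prod (h₃.prod h₄))]
  congr 1
  funext ⟨a, b, c, d⟩
  simp only [altSign, Int.negOnePow_add, Units.val_mul, mul_assoc]

lemma phiNeg_pow_four :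
    phiNeg ^ 4 = expand₃ phiNeg ^ 4 - 8 * (X * thetaW ^ 3 * expand₃ phiNeg) := by
  have h3 : IsThetaExponent fun k : ℤ => ((3 : ℕ) : ℤ) * k ^ 2 :=
    isThetaExponent_sq.const_mul (by norm_num)
  have hφ : phiNeg ^ 4 = thetaSeries sumSq altSign := by
    rw [phiNeg_eq_thetaSeries, pow_succ, pow_three, mul_assoc, mul_assoc,
      thetaSeries_negOnePow_mul_four isThetaExponent_sq isThetaExponent_sq isThetaExponent_sq
        isThetaExponent_sq]
    congr 1
    funext ⟨a, b, c, d⟩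
    simp only [sumSq]
    ring
  have hφ₃ : expand₃ phiNeg ^ 4 = thetaSeries (fun x => 3 * sumSq x) altSign := by
    rw [phiNeg_eq_thetaSeries, expand_thetaSeries, pow_succ, pow_three, mul_assoc, mul_assoc,
      thetaSeries_negOnePow_mul_four h3 h3 h3 h3]
    congr 1
    funext ⟨a, b, c, d⟩
    simp only [sumSq]
    push_cast
    ring
  have hW : X * thetaW ^ 3 * expand₃ phiNeg = thetaSeries thetaWNorm altSign := by
    have hW := isThetaExponent_thetaW
    rw [thetaW, phiNeg_eq_thetaSeries, expand_thetaSeries, pow_three, mul_assoc, mul_assoc,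
      mul_assoc, thetaSeries_negOnePow_mul_four hW hW hW h3,
      X_mul_thetaSeries (hW.prod (hW.prod (hW.prod h3)))]
    congr 1
    funext ⟨a, b, c, d⟩
    simp only [thetaWNorm]
    push_cast
    ring
  rw [hφ, hφ₃, hW]
  ext n
  rw [map_sub, ← map_ofNat C, coeff_C_mul]
  simp only [coeff_thetaSeries]
  exact finsum_altSign_sumSq n

lemma cube_eq_of_theta_relations {R : Type*} [CommRing R] {A B C D u v A' B' : R}
    (hA : A = C - 2 * u) (hB : B = D - 2 * v) (hC : B ^ 4 = C ^ 4 - 8 * u ^ 3 * C)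
    (hD : C ^ 4 = D ^ 4 - 8 * v ^ 3 * D) (hA' : A * A' = 1) (hB' : B * B' = 1) :
    (C * A') ^ 3 =
      (D * B' - 3 * (D * B') ^ 2 + 3 * (D * B') ^ 3) * (3 * (C * A') ^ 2 - 3 * (C * A') + 1) := by
  -- `x := C * A'` satisfies `x - 1 = 2 * u * A'`, and `3x² - 3x + 1 = x³ - (x - 1)³`
  have hx : 3 * (C * A') ^ 2 - 3 * (C * A') + 1 = (C ^ 3 - 8 * u ^ 3) * A' ^ 3 := by
    linear_combination (-((C * A' - 1) ^ 2 + (C * A' - 1) * (2 * u * A') + (2 * u * A') ^ 2)) *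
      (hA' - A' * hA)
  have hy : 3 * (D * B') ^ 2 - 3 * (D * B') + 1 = (D ^ 3 - 8 * v ^ 3) * B' ^ 3 := by
    linear_combination (-((D * B' - 1) ^ 2 + (D * B' - 1) * (2 * v * B') + (2 * v * B') ^ 2)) *
      (hB' - B' * hB)
  calc (C * A') ^ 3 = A' ^ 3 * B' ^ 4 * (C ^ 3 * B ^ 4) := by
        linear_combination (-(C * A') ^ 3 * ((B * B') ^ 3 + (B * B') ^ 2 + B * B' + 1)) * hB'
    _ = A' ^ 3 * B' ^ 4 * (D * (D ^ 3 - 8 * v ^ 3) * (C ^ 3 - 8 * u ^ 3)) := by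
        linear_combination A' ^ 3 * B' ^ 4 * (C ^ 3 * hC + (C ^ 3 - 8 * u ^ 3) * hD)
    _ = _ := by
        linear_combination (-(D * B') * (3 * (C * A') ^ 2 - 3 * (C * A') + 1)) * hy -
          D * B' * (D ^ 3 - 8 * v ^ 3) * B' ^ 3 * hx

lemma xi_pow_three :
    xi ^ 3 = expand₃ (xi - 3 * xi ^ 2 + 3 * xi ^ 3) * (3 * xi ^ 2 - 3 * xi + 1) := by
  have hinv : phiNeg * phiNegInv = 1 :=
    mul_invOfUnit _ _ (by simp [phiNeg, ← coeff_zero_eq_constantCoeff_apply])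
  have hquart₃ := congrArg expand₃ phiNeg_pow_four
  have hquart₉ := congrArg expand₃ hquart₃
  have hdiss₃ := congrArg expand₃ phiNeg_dissection
  simp only [map_sub, map_mul, map_pow, map_ofNat, PowerSeries.expand_X] at hquart₃ hquart₉ hdiss₃
  rw [xi, expand_eq_powerSeries_expand (by norm_num),
    PowerSeries.expand_mul 3 three_ne_zero 3 three_ne_zero]
  simp only [map_sub, map_add, map_mul, map_pow, map_ofNat]
  exact cube_eq_of_theta_relations phiNeg_dissection hdiss₃ (by linear_combination hquart₃)
    (by linear_combination hquart₉) hinv (by rw [← map_mul, hinv, map_one])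

lemma coeff_U (f : PowerSeries ℤ) (n : ℕ) : coeff n (U f) = coeff (3 * n) f :=
  coeff_mk _ _

lemma U_add (f g : PowerSeries ℤ) : U (f + g) = U f + U g := by
  ext n
  simp only [coeff_U, map_add]

lemma U_sub (f g : PowerSeries ℤ) : U (f - g) = U f - U g := by
  ext n
  simp only [coeff_U, map_sub]

lemma U_expand_mul (f g : PowerSeries ℤ) : U (expand₃ f * g) = f * U g := by
  ext n
  have hinj : InjOn (fun p : ℕ × ℕ => (3 * p.1, 3 * p.2))
      ↑(Finset.HasAntidiagonal.antidiagonal n) := by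
    intro p _ q _ h
    simp only [Prod.mk.injEq] at h
    exact Prod.ext (by omega) (by omega)
  rw [coeff_U, coeff_mul, coeff_mul]
  simp_rw [coeff_U, ← coeff_expand_mul 3 three_ne_zero f]
  rw [← Finset.sum_image (g := fun p : ℕ × ℕ => (3 * p.1, 3 * p.2))
    (f := fun p => coeff p.1 (expand₃ f) * coeff p.2 g) hinj]
  symm
  apply Finset.sum_subset
  · intro x hx
    simp only [Finset.mem_image, Finset.HasAntidiagonal.mem_antidiagonal] at hx ⊢
    obtain ⟨p, hp, rfl⟩ := hx
    omega
  · intro x hx hx'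
    simp only [Finset.mem_image, Finset.HasAntidiagonal.mem_antidiagonal, not_exists,
      not_and] at hx hx'
    rw [coeff_expand_of_not_dvd 3 three_ne_zero f, zero_mul]
    rintro ⟨i, hi⟩
    exact hx' (i, x.2 / 3) (by omega) (Prod.ext hi.symm (by simp only; omega))

theorem U_xi_recurrence (i : ℕ) (hi : 3 ≤ i) :
    U (xi ^ i) =
      (xi - 3 * xi ^ 2 + 3 * xi ^ 3) *
        (3 * U (xi ^ (i - 1)) - 3 * U (xi ^ (i - 2)) + U (xi ^ (i - 3))) := by
  obtain ⟨k, rfl⟩ := Nat.exists_eq_add_of_le' hi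
  have U_three_mul (g : PowerSeries ℤ) : U (3 * g) = 3 * U g := by
    rw [← U_expand_mul, map_ofNat]
  have hpow : xi ^ (k + 3) =
      expand₃ (xi - 3 * xi ^ 2 + 3 * xi ^ 3) * (3 * xi ^ (k + 2) - 3 * xi ^ (k + 1) + xi ^ k) := by
    rw [pow_add]
    linear_combination xi ^ k * xi_pow_three
  rw [hpow, U_expand_mul, U_add, U_sub, U_three_mul, U_three_mul, Nat.add_sub_cancel,
    show k + 3 - 1 = k + 2 by omega, show k + 3 - 2 = k + 1 by omega]
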